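/- arXiv:1205.1095 — 2 statements merged into one kernel-verified Lean document; each statement's English description precedes it below -/
import Mathlib

section
/- Let M be a von Neumann algebra and P, Q ∈ M projections with P + Q = I and both having central carrier equal to I (and the carriers are nonzero). If T ∈ M commutes with PXQ and with QXP for every X ∈ M, then T ∈ Z(M). -/
variable {H : Type*} [NormedAddCommGroup H] [InnerProductSpace ℂ H] [CompleteSpace H]

/-- `Z` lies in the center of the von Neumann algebra `M`. -/
def VonNeumannAlgebra.IsCentral (M : VonNeumannAlgebra H) (Z : H →L[ℂ] H) : Prop :=
  Z ∈ M ∧ ∀ A ∈ M, Z * A = A * Z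

/-- `P` is a projection (self-adjoint idempotent) in `M`. -/
def VonNeumannAlgebra.IsProjection (M : VonNeumannAlgebra H) (P : H →L[ℂ] H) : Prop :=
  P ∈ M ∧ P * P = P ∧ star P = P

/-- `Q` is a central projection of `M`. -/
def VonNeumannAlgebra.IsCentralProjection (M : VonNeumannAlgebra H) (Q : H →L[ℂ] H) : Prop :=
  M.IsCentral Q ∧ Q * Q = Q ∧ star Q = Q

/-- The core of the projection `P` (the largest central projection below `P`) is zero,
i.e. the only central projection `Q` with `Q ≤ P` (equivalently `Q * P = Q`) is `0`. -/
def VonNeumannAlgebra.CoreZero (M : VonNeumannAlgebra H) (P : H →L[ℂ] H) : Prop :=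
  ∀ Q : H →L[ℂ] H, M.IsCentralProjection Q → Q * P = Q → Q = 0

/-- The central carrier of the projection `P` (the smallest central projection above `P`)
is `1`, i.e. the only central projection `Q` with `Q * P = P` is `1`. -/
def VonNeumannAlgebra.CarrierOne (M : VonNeumannAlgebra H) (P : H →L[ℂ] H) : Prop :=
  ∀ Q : H →L[ℂ] H, M.IsCentralProjection Q → Q * P = P → Q = 1

/-- `M` has no central summand of type I₁: equivalently, `M` contains a projection
with core `0` and central carrier `1`. -/
def VonNeumannAlgebra.NoTypeI1 (M : VonNeumannAlgebra H) : Prop :=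
  ∃ P : H →L[ℂ] H, M.IsProjection P ∧ M.CoreZero P ∧ M.CarrierOne P

/-!
Since `P + Q = 1`, every `A ∈ M` splits into the four corners `PAP`, `PAQ`, `QAP`, `QAQ`, and
`T` commutes with the off-diagonal ones by hypothesis. Central carrier `1` for `P` means that
`S * B * P = 0` for all `B ∈ M` forces `S = 0`: the projection onto the closed span of `M P H`
is invariant under `M` and `M'`, hence central, and dominates `P`, so it is `1`. Testing against
`B * Q` and `B * P` this way shows first that `P T Q = Q T P = 0`, so that `T` commutes with `P`,
and then that `T` commutes with the diagonal corners too.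
-/

section Corners

variable {R S : Type*} [Ring R] [SetLike S R] {M : S} {P Q T : R}

theorem mul_mul_eq_zero_of_commute_corner (hQP : Q * P = 0)
    (hQ : ∀ X : R, (∀ B ∈ M, X * B * Q = 0) → X = 0)
    (hT : ∀ X ∈ M, Commute T (P * X * Q)) : Q * T * P = 0 :=
  hQ _ fun B hB => calc
    Q * T * P * B * Q = Q * (T * (P * B * Q)) := by noncomm_ring
    _ = Q * P * (B * Q * T) := by rw [(hT B hB).eq]; noncomm_ring
    _ = 0 := by rw [hQP, zero_mul]

theorem commute_of_mul_mul_eq_zero (hPQ : P + Q = 1) (hPTQ : P * T * Q = 0)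
    (hQTP : Q * T * P = 0) : Commute T P := calc
  T * P = (P + Q) * T * P := by rw [hPQ, one_mul]
  _ = P * T * P + Q * T * P := by noncomm_ring
  _ = P * T * P + P * T * Q := by rw [hPTQ, hQTP]
  _ = P * T * (P + Q) := by noncomm_ring
  _ = P * T := by rw [hPQ, mul_one]

theorem commute_diag_corner [MulMemClass S R] (hPM : P ∈ M)
    (hQ : ∀ X : R, (∀ B ∈ M, X * B * Q = 0) → X = 0) (hTP : Commute T P)
    (hT : ∀ X ∈ M, Commute T (P * X * Q)) {A : R} (hA : A ∈ M) :
    Commute T (P * A * P) :=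
  sub_eq_zero.mp <| hQ _ fun B hB => calc
    (T * (P * A * P) - P * A * P * T) * B * Q
        = T * (P * (A * P * B) * Q) - P * A * (P * T) * B * Q := by noncomm_ring
    _ = P * (A * P * B) * Q * T - P * A * (T * (P * B * Q)) := by
      rw [(hT _ (mul_mem (mul_mem hA hPM) hB)).eq, ← hTP.eq]; noncomm_ring
    _ = 0 := by rw [(hT B hB).eq]; noncomm_ring

theorem commute_of_commute_corners [MulMemClass S R] (hPP : P * P = P) (hPQ : P + Q = 1)
    (hPM : P ∈ M) (hQM : Q ∈ M) (hP : ∀ X : R, (∀ B ∈ M, X * B * P = 0) → X = 0)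
    (hQ : ∀ X : R, (∀ B ∈ M, X * B * Q = 0) → X = 0)
    (hPQT : ∀ X ∈ M, Commute T (P * X * Q)) (hQPT : ∀ X ∈ M, Commute T (Q * X * P))
    {A : R} (hA : A ∈ M) : Commute T A := by
  obtain rfl : Q = 1 - P := eq_sub_of_add_eq' hPQ
  have hPQ0 : P * (1 - P) = 0 := by rw [mul_sub, mul_one, hPP, sub_self]
  have hQP0 : (1 - P) * P = 0 := by rw [sub_mul, one_mul, hPP, sub_self]
  have hTP : Commute T P := commute_of_mul_mul_eq_zero hPQ
    (mul_mul_eq_zero_of_commute_corner hPQ0 hP hQPT)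
    (mul_mul_eq_zero_of_commute_corner hQP0 hQ hPQT)
  have hTQ : Commute T (1 - P) := (Commute.one_right T).sub_right hTP
  have hsplit : A = P * A * P + P * A * (1 - P) + (1 - P) * A * P + (1 - P) * A * (1 - P) := by
    noncomm_ring
  rw [hsplit]
  exact (((commute_diag_corner hPM hQ hTP hPQT hA).add_right (hPQT A hA)).add_right
    (hQPT A hA)).add_right (commute_diag_corner hQM hP hTQ hQPT hA)

end Corners

namespace VonNeumannAlgebra

open Module.End

theorem isCentralProjection_starProjection (M : VonNeumannAlgebra H)
    (K : Submodule ℂ H) [K.HasOrthogonalProjection]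
    (hM : ∀ A ∈ M, K ∈ invtSubmodule A.toLinearMap)
    (hM' : ∀ C ∈ M.commutant, K ∈ invtSubmodule C.toLinearMap) :
    M.IsCentralProjection K.starProjection := by
  have hE : IsStarProjection K.starProjection := isStarProjection_starProjection
  have hEM : K.starProjection ∈ M := (IsStarProjection.mem_iff hE M).mpr <| by
    simpa only [Submodule.range_starProjection] using hM'
  have hEM' : K.starProjection ∈ M.commutant :=
    (IsStarProjection.mem_iff hE M.commutant).mpr <| by
      simpa only [Submodule.range_starProjection, commutant_commutant] using hM
  exact ⟨⟨hEM, fun A hA => (mem_commutant_iff.mp hEM' A hA).symm⟩,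
    hE.isIdempotentElem.eq, hE.isSelfAdjoint.star_eq⟩

theorem eq_zero_of_forall_mul_mul_eq_zero (M : VonNeumannAlgebra H)
    {P S : H →L[ℂ] H} (hPM : P ∈ M) (hP : M.CarrierOne P) (hS : ∀ B ∈ M, S * B * P = 0) :
    S = 0 := by
  set s : Set H := {y | ∃ B ∈ M, ∃ x, B (P x) = y}
  set K : Submodule ℂ H := (Submodule.span ℂ s).topologicalClosure
  have hinv {C : H →L[ℂ] H} (hC : Set.MapsTo C s s) : K ∈ invtSubmodule C.toLinearMap :=
    Submodule.topologicalClosure_mem_invtSubmodule <| Submodule.span_le.mpr fun y hy =>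
      Submodule.subset_span (hC hy)
  have hcentral : M.IsCentralProjection K.starProjection := by
    refine M.isCentralProjection_starProjection K (fun A hA => hinv ?_) (fun C hC => hinv ?_)
    · rintro _ ⟨B, hB, x, rfl⟩
      exact ⟨A * B, mul_mem hA hB, x, rfl⟩
    · rintro _ ⟨B, hB, x, rfl⟩
      refine ⟨B, hB, C x, ?_⟩
      simpa using DFunLike.congr_fun (mem_commutant_iff.mp hC _ (mul_mem hB hPM)) x
  have hPK : K.starProjection * P = P := by
    ext x
    exact K.starProjection_eq_self_iff.mpr <| Submodule.le_topologicalClosure _ <|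
      Submodule.subset_span ⟨1, one_mem M, x, rfl⟩
  have hK : K ≤ LinearMap.ker S.toLinearMap := by
    refine Submodule.topologicalClosure_minimal _ (Submodule.span_le.mpr ?_) S.isClosed_ker
    rintro _ ⟨B, hB, x, rfl⟩
    simpa using DFunLike.congr_fun (hS B hB) x
  have hK1 : K.starProjection = 1 := hP _ hcentral hPK
  ext x
  exact hK (K.starProjection_eq_self_iff.mp (by rw [hK1]; rfl))

end VonNeumannAlgebra

theorem comm_with_corners_mem_center_general (M : VonNeumannAlgebra H) (P Q T : H →L[ℂ] H)
    (hP : M.IsProjection P) (hQ : M.IsProjection Q) (hPQ : P + Q = 1)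
    (hcP : M.CarrierOne P) (hcQ : M.CarrierOne Q)
    (hT : T ∈ M)
    (hcomm : ∀ X ∈ M, T * (P * X * Q) = (P * X * Q) * T ∧ T * (Q * X * P) = (Q * X * P) * T) :
    M.IsCentral T :=
  ⟨hT, fun _ hA => commute_of_commute_corners hP.2.1 hPQ hP.1 hQ.1
    (fun _ => M.eq_zero_of_forall_mul_mul_eq_zero hP.1 hcP)
    (fun _ => M.eq_zero_of_forall_mul_mul_eq_zero hQ.1 hcQ)
    (fun X hX => (hcomm X hX).1) (fun X hX => (hcomm X hX).2) hA⟩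

theorem comm_with_corners_mem_center (M : VonNeumannAlgebra H) (P Q T : H →L[ℂ] H)
    (hP : M.IsProjection P) (hQ : M.IsProjection Q) (hPQ : P + Q = 1)
    (hcP : M.CarrierOne P) (hcQ : M.CarrierOne Q) (hone : (1 : H →L[ℂ] H) ≠ 0)
    (hT : T ∈ M)
    (hcomm : ∀ X ∈ M, T * (P * X * Q) = (P * X * Q) * T ∧ T * (Q * X * P) = (Q * X * P) * T) :
    M.IsCentral T :=
  comm_with_corners_mem_center_general M P Q T hP hQ hPQ hcP hcQ hT hcomm
end

section
/- Let M be a von Neumann algebra with a projection P having core 0 and central carrier I, and let L : M → M be an additive map such that L(AB − BA) = L(A)B − BL(A) + L(B)A − AL(B) whenever AB = 0. Then PL(P)P + (I−P)L(P)(I−P) belongs to the center Z(M). -/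
/-!
Write `Q = 1 - P` and `T = P L(P) P + Q L(P) Q`. Applying the hypothesis on `L` to the pairs
`(P X Q, P)` and `(Q X Q, P)` shows that `T` commutes with every `W Q`, `W ∈ M`. Hence for
`Y ∈ M` the commutator `[T, Y]` annihilates every `X Q`, i.e. vanishes on the closed span of
`M Q H`. The projection onto that subspace is the central carrier of `Q`, and it is `1` because
its complement is a central projection below `P`, which must vanish since `P` has core `0`.
-/

variable {H : Type*} [NormedAddCommGroup H] [InnerProductSpace ℂ H] [CompleteSpace H]

open Module.End Submodule ContinuousLinearMap

theorem Submodule.topologicalClosure_span_mem_invtSubmodule {R E : Type*} [Semiring R]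
    [TopologicalSpace E] [AddCommMonoid E] [Module R E] [ContinuousAdd E]
    [ContinuousConstSMul R E] {s : Set E} {T : E →L[R] E}
    (h : ∀ x ∈ s, T x ∈ (span R s).topologicalClosure) :
    (span R s).topologicalClosure ∈ invtSubmodule (T : E →ₗ[R] E) :=
  (span R s).topologicalClosure_minimal (span_le.2 h)
    ((span R s).isClosed_topologicalClosure.preimage T.continuous)

theorem Submodule.commute_starProjection_of_mem_invtSubmodule {𝕜 E : Type*} [RCLike 𝕜]
    [NormedAddCommGroup E] [InnerProductSpace 𝕜 E] [CompleteSpace E] {K : Submodule 𝕜 E}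
    [K.HasOrthogonalProjection] {T : E →L[𝕜] E} (h : K ∈ invtSubmodule (T : E →ₗ[𝕜] E))
    (h' : K ∈ invtSubmodule (adjoint T : E →ₗ[𝕜] E)) :
    Commute K.starProjection T :=
  K.isIdempotentElem_starProjection.commute_iff.2 <| by
    rw [K.range_starProjection, K.ker_starProjection]
    exact ⟨h, orthogonal_mem_invtSubmodule h'⟩

theorem map_zero_of_map_add {G S : Type*} [AddGroup G] [SetLike S G] [ZeroMemClass S G]
    {s : S} {L : G → G} (hadd : ∀ a ∈ s, ∀ b ∈ s, L (a + b) = L a + L b) : L 0 = 0 := by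
  simpa using hadd 0 (zero_mem s) 0 (zero_mem s)

theorem map_neg_of_map_add {G S : Type*} [AddGroup G] [SetLike S G] [AddSubgroupClass S G]
    {s : S} {L : G → G} (hadd : ∀ a ∈ s, ∀ b ∈ s, L (a + b) = L a + L b) {a : G} (ha : a ∈ s) :
    L (-a) = -L a := by
  have := hadd a ha (-a) (neg_mem ha)
  rw [add_neg_cancel, map_zero_of_map_add hadd] at this
  exact eq_neg_of_add_eq_zero_right this.symm

section Peirce

variable {R : Type*} [Ring R] {P A : R}

def peirceDiag (P X : R) : R := P * X * P + (1 - P) * X * (1 - P)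

theorem mul_peirceDiag_of_mul_eq_zero (hAP : A * P = 0) (X : R) :
    A * peirceDiag P X = A * X * (1 - P) := by
  have hAQ : A * (1 - P) = A := by rw [mul_sub, mul_one, hAP, sub_zero]
  simp only [peirceDiag, mul_add, ← mul_assoc, hAP, hAQ, zero_mul, zero_add]

theorem peirceDiag_mul_of_mul_eq_self (hPA : P * A = A) (X : R) :
    peirceDiag P X * A = P * X * A := by
  have hQA : (1 - P) * A = 0 := by rw [sub_mul, one_mul, hPA, sub_self]
  simp only [peirceDiag, add_mul, mul_assoc, hPA, hQA, mul_zero, add_zero]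

theorem peirceDiag_mul_of_mul_eq_zero (hPA : P * A = 0) (X : R) :
    peirceDiag P X * A = (1 - P) * X * A := by
  have hQA : (1 - P) * A = A := by rw [sub_mul, one_mul, hPA, sub_zero]
  simp only [peirceDiag, add_mul, mul_assoc, hPA, hQA, mul_zero, zero_add]

variable {L : R → R}

theorem commute_peirceDiag_of_mul_eq_zero_of_mul_eq_self (hP : IsIdempotentElem P)
    (hAP : A * P = 0) (hPA : P * A = A) (hneg : L (-A) = -L A)
    (h : L (A * P - P * A) = L A * P - P * L A + L P * A - A * L P) :
    Commute (peirceDiag P (L P)) A := by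
  have hAQ : A * (1 - P) = A := by rw [mul_sub, mul_one, hAP, sub_zero]
  rw [hAP, hPA, zero_sub, hneg] at h
  have hLA : L P * A = -L A - L A * P + P * L A + A * L P := by
    linear_combination (norm := abel) -h
  rw [Commute, SemiconjBy, peirceDiag_mul_of_mul_eq_self hPA, mul_peirceDiag_of_mul_eq_zero hAP]
  calc P * L P * A = P * (L P * A) * (1 - P) := by rw [mul_assoc, mul_assoc, mul_assoc (L P), hAQ]
    _ = -(P * L A * (1 - P)) - P * L A * (P * (1 - P)) + P * P * L A * (1 - P)
          + P * A * L P * (1 - P) := by rw [hLA]; noncomm_ring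
    _ = A * L P * (1 - P) := by rw [hP.mul_one_sub_self, hP.eq, hPA]; noncomm_ring

theorem commute_peirceDiag_of_mul_eq_zero_of_mul_eq_zero (hP : IsIdempotentElem P)
    (hAP : A * P = 0) (hPA : P * A = 0) (h0 : L 0 = 0)
    (h : L (A * P - P * A) = L A * P - P * L A + L P * A - A * L P) :
    Commute (peirceDiag P (L P)) A := by
  have hAQ : A * (1 - P) = A := by rw [mul_sub, mul_one, hAP, sub_zero]
  have hQA : (1 - P) * A = A := by rw [sub_mul, one_mul, hPA, sub_zero]
  rw [hAP, hPA, sub_zero, h0] at h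
  have hLA : L P * A = P * L A - L A * P + A * L P := by
    linear_combination (norm := abel) -h
  rw [Commute, SemiconjBy, peirceDiag_mul_of_mul_eq_zero hPA, mul_peirceDiag_of_mul_eq_zero hAP]
  calc (1 - P) * L P * A = (1 - P) * (L P * A) * (1 - P) := by
        rw [mul_assoc, mul_assoc, mul_assoc (L P), hAQ]
    _ = (1 - P) * P * L A * (1 - P) - (1 - P) * L A * (P * (1 - P))
          + (1 - P) * A * L P * (1 - P) := by rw [hLA]; noncomm_ring
    _ = A * L P * (1 - P) := by
        rw [hP.mul_one_sub_self, hP.one_sub_mul_self, hQA]; noncomm_ring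

end Peirce

namespace VonNeumannAlgebra

variable (M : VonNeumannAlgebra H)

/-- The closed subspace `[M Q H]`; for `Q ∈ M` its projection is the central carrier of `Q`. -/
noncomputable def cyclicSubspace (Q : H →L[ℂ] H) : Submodule ℂ H :=
  (span ℂ (⋃ X ∈ M, Set.range (X * Q))).topologicalClosure

instance (Q : H →L[ℂ] H) : CompleteSpace (M.cyclicSubspace Q) :=
  (isClosed_topologicalClosure _).completeSpace_coe

theorem IsCentralProjection.one_sub {E : H →L[ℂ] H} (hE : M.IsCentralProjection E) :
    M.IsCentralProjection (1 - E) := by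
  obtain ⟨⟨hEM, hEA⟩, hEE, hEs⟩ := hE
  refine ⟨⟨sub_mem (one_mem M) hEM, fun A hA => ?_⟩, IsIdempotentElem.one_sub hEE, ?_⟩
  · rw [sub_mul, mul_sub, one_mul, mul_one, hEA A hA]
  · rw [star_sub, star_one, hEs]

theorem apply_mem_cyclicSubspace {X Q : H →L[ℂ] H} (hX : X ∈ M) (ξ : H) :
    X (Q ξ) ∈ M.cyclicSubspace Q :=
  le_topologicalClosure _ (subset_span (Set.mem_biUnion hX ⟨ξ, rfl⟩))

theorem cyclicSubspace_mem_invtSubmodule_of_mem {A : H →L[ℂ] H} (hA : A ∈ M) (Q : H →L[ℂ] H) :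
    M.cyclicSubspace Q ∈ invtSubmodule (A : H →ₗ[ℂ] H) := by
  refine topologicalClosure_span_mem_invtSubmodule fun x hx => ?_
  obtain ⟨X, hX, ξ, rfl⟩ := Set.mem_iUnion₂.1 hx
  exact M.apply_mem_cyclicSubspace (mul_mem hA hX) ξ

theorem cyclicSubspace_mem_invtSubmodule_of_mem_commutant {z Q : H →L[ℂ] H}
    (hz : z ∈ M.commutant) (hQ : Q ∈ M) :
    M.cyclicSubspace Q ∈ invtSubmodule (z : H →ₗ[ℂ] H) := by
  refine topologicalClosure_span_mem_invtSubmodule fun x hx => ?_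
  obtain ⟨X, hX, ξ, rfl⟩ := Set.mem_iUnion₂.1 hx
  have hzXQ : z ((X * Q) ξ) = X (Q (z ξ)) := by
    simpa using congr($(mem_commutant_iff.1 hz _ (mul_mem hX hQ)) ξ).symm
  rw [hzXQ]
  exact M.apply_mem_cyclicSubspace hX (z ξ)

theorem isCentralProjection_starProjection_cyclicSubspace {Q : H →L[ℂ] H} (hQ : Q ∈ M) :
    M.IsCentralProjection (M.cyclicSubspace Q).starProjection := by
  have hproj := isStarProjection_starProjection (U := M.cyclicSubspace Q)
  refine ⟨⟨(IsStarProjection.mem_iff hproj M).2 fun z hz => ?_, fun A hA => ?_⟩, hproj.1, hproj.2⟩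
  · rw [range_starProjection]
    exact M.cyclicSubspace_mem_invtSubmodule_of_mem_commutant hz hQ
  · refine (commute_starProjection_of_mem_invtSubmodule
      (M.cyclicSubspace_mem_invtSubmodule_of_mem hA Q) ?_).eq
    rw [← star_eq_adjoint]
    exact M.cyclicSubspace_mem_invtSubmodule_of_mem (star_mem hA) Q

theorem starProjection_cyclicSubspace_mul_self (Q : H →L[ℂ] H) :
    (M.cyclicSubspace Q).starProjection * Q = Q := by
  ext ξ
  refine starProjection_eq_self_iff.2 ?_
  simpa using M.apply_mem_cyclicSubspace (one_mem M) (Q := Q) ξ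

theorem mul_starProjection_cyclicSubspace_eq_zero {Z Q : H →L[ℂ] H}
    (hZ : ∀ X ∈ M, Z * (X * Q) = 0) : Z * (M.cyclicSubspace Q).starProjection = 0 := by
  have hker : M.cyclicSubspace Q ≤ LinearMap.ker (Z : H →ₗ[ℂ] H) := by
    refine topologicalClosure_minimal _ (span_le.2 fun x hx => ?_) (isClosed_ker Z)
    obtain ⟨X, hX, ξ, rfl⟩ := Set.mem_iUnion₂.1 hx
    exact congr($(hZ X hX) ξ)
  ext ξ
  exact hker (starProjection_apply_mem _ ξ)

theorem starProjection_cyclicSubspace_one_sub_eq_one {P : H →L[ℂ] H} (hP : P ∈ M)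
    (hcore : M.CoreZero P) : (M.cyclicSubspace (1 - P)).starProjection = 1 := by
  set E := (M.cyclicSubspace (1 - P)).starProjection
  have hcentral := (M.isCentralProjection_starProjection_cyclicSubspace
    (sub_mem (one_mem M) hP)).one_sub
  have hbelow : (1 - E) * P = 1 - E := by
    have := M.starProjection_cyclicSubspace_mul_self (1 - P)
    rw [mul_sub, mul_one] at this
    rw [sub_mul, one_mul]
    linear_combination (norm := abel) this
  exact (sub_eq_zero.1 (hcore _ hcentral hbelow)).symm

theorem eq_zero_of_forall_mul_mul_one_sub_eq_zero {P Z : H →L[ℂ] H} (hP : P ∈ M)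
    (hcore : M.CoreZero P) (hZ : ∀ X ∈ M, Z * (X * (1 - P)) = 0) : Z = 0 := by
  simpa [M.starProjection_cyclicSubspace_one_sub_eq_one hP hcore] using
    M.mul_starProjection_cyclicSubspace_eq_zero hZ

theorem commute_peirceDiag_mul_one_sub {P : H →L[ℂ] H} (hPM : P ∈ M) (hP : IsIdempotentElem P)
    {L : (H →L[ℂ] H) → (H →L[ℂ] H)} (hadd : ∀ A ∈ M, ∀ B ∈ M, L (A + B) = L A + L B)
    (hcond : ∀ A ∈ M, ∀ B ∈ M, A * B = 0 →
      L (A * B - B * A) = L A * B - B * L A + L B * A - A * L B)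
    {W : H →L[ℂ] H} (hW : W ∈ M) : Commute (peirceDiag P (L P)) (W * (1 - P)) := by
  have hQM : 1 - P ∈ M := sub_mem (one_mem M) hPM
  have hQP : ∀ X, X * (1 - P) * P = 0 := fun X => by
    rw [mul_assoc, hP.one_sub_mul_self, mul_zero]
  have hsplit : W * (1 - P) = P * W * (1 - P) + (1 - P) * W * (1 - P) := by noncomm_ring
  have hoff : P * W * (1 - P) ∈ M := mul_mem (mul_mem hPM hW) hQM
  have hdiag : (1 - P) * W * (1 - P) ∈ M := mul_mem (mul_mem hQM hW) hQM
  rw [hsplit]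
  refine .add_right ?_ ?_
  · refine commute_peirceDiag_of_mul_eq_zero_of_mul_eq_self hP (hQP _) ?_
      (map_neg_of_map_add hadd hoff) (hcond _ hoff P hPM (hQP _))
    rw [← mul_assoc, ← mul_assoc, hP.eq]
  · refine commute_peirceDiag_of_mul_eq_zero_of_mul_eq_zero hP (hQP _) ?_
      (map_zero_of_map_add hadd) (hcond _ hdiag P hPM (hQP _))
    rw [← mul_assoc, ← mul_assoc, hP.mul_one_sub_self, zero_mul, zero_mul]

end VonNeumannAlgebra

theorem diag_part_of_LP_central_general (M : VonNeumannAlgebra H) (P : H →L[ℂ] H)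
    (hP : M.IsProjection P) (hcore : M.CoreZero P)
    (L : (H →L[ℂ] H) → (H →L[ℂ] H))
    (hmaps : ∀ A ∈ M, L A ∈ M)
    (hadd : ∀ A ∈ M, ∀ B ∈ M, L (A + B) = L A + L B)
    (hcond : ∀ A ∈ M, ∀ B ∈ M, A * B = 0 →
      L (A * B - B * A) = L A * B - B * L A + L B * A - A * L B) :
    M.IsCentral (P * L P * P + (1 - P) * L P * (1 - P)) := by
  have hPM : P ∈ M := hP.1
  have hQM : 1 - P ∈ M := sub_mem (one_mem M) hPM
  set T := peirceDiag P (L P)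
  have hT : ∀ W ∈ M, Commute T (W * (1 - P)) := fun W hW =>
    M.commute_peirceDiag_mul_one_sub hPM hP.2.1 hadd hcond hW
  refine ⟨add_mem (mul_mem (mul_mem hPM (hmaps P hPM)) hPM)
    (mul_mem (mul_mem hQM (hmaps P hPM)) hQM), fun Y hY => ?_⟩
  rw [← sub_eq_zero]
  refine M.eq_zero_of_forall_mul_mul_one_sub_eq_zero hPM hcore fun X hX => ?_
  calc (T * Y - Y * T) * (X * (1 - P))
        = T * (Y * X * (1 - P)) - Y * (T * (X * (1 - P))) := by noncomm_ring
    _ = Y * X * (1 - P) * T - Y * (X * (1 - P) * T) := by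
        rw [(hT _ (mul_mem hY hX)).eq, (hT X hX).eq]
    _ = 0 := by noncomm_ring

theorem diag_part_of_LP_central (M : VonNeumannAlgebra H) (P : H →L[ℂ] H)
    (hP : M.IsProjection P) (hcore : M.CoreZero P) (hcar : M.CarrierOne P)
    (L : (H →L[ℂ] H) → (H →L[ℂ] H))
    (hmaps : ∀ A ∈ M, L A ∈ M)
    (hadd : ∀ A ∈ M, ∀ B ∈ M, L (A + B) = L A + L B)
    (hcond : ∀ A ∈ M, ∀ B ∈ M, A * B = 0 →
      L (A * B - B * A) = L A * B - B * L A + L B * A - A * L B) :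
    M.IsCentral (P * L P * P + (1 - P) * L P * (1 - P)) :=
  diag_part_of_LP_central_general M P hP hcore L hmaps hadd hcond
end
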